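/- In Rulesets A, B and D, the Grundy value of a superposition of single Nim heaps depends only on the size of the largest heap in the superposition: if two superpositions of single Nim heaps have the same maximum heap size, they have the same Grundy value. -/

import Mathlib

namespace QGame

variable {Pos Move : Type} [DecidableEq Pos]

/-- Result of applying the superposed move `M` (a finite set of classical move
labels) to the superposition `S` of classical positions: the set of all results
of a classical move of `M` applied to a realisation where it is legal. -/
def qApply (Γ : Pos → Move → Option Pos) (S : Finset Pos) (M : Finset Move) :
    Finset Pos :=
  S.biUnion fun G => M.biUnion fun m => (Γ G m).toFinset

/-- The classical move `m` is legal in at least one realisation of `S`. -/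
def MoveLegal (Γ : Pos → Move → Option Pos) (S : Finset Pos) (m : Move) : Prop :=
  ∃ G ∈ S, (Γ G m).isSome

/-- Basic legality of a Q-move: nonempty, and each classical move is legal
in at least one realisation. -/
def QBase (Γ : Pos → Move → Option Pos) (S : Finset Pos) (M : Finset Move) : Prop :=
  M.Nonempty ∧ ∀ m ∈ M, MoveLegal Γ S m

/-- Ruleset A : superpositions of at least two distinct classical moves. -/
def QLegalA (Γ : Pos → Move → Option Pos) (S : Finset Pos) (M : Finset Move) : Prop :=
  QBase Γ S M ∧ 2 ≤ M.card

/-- Ruleset B : as A, except a lone classical move may be played when it is the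
only legal classical move over all realisations. -/
def QLegalB (Γ : Pos → Move → Option Pos) (S : Finset Pos) (M : Finset Move) : Prop :=
  QBase Γ S M ∧ (2 ≤ M.card ∨ ∀ m, MoveLegal Γ S m → m ∈ M)

/-- Ruleset C : a lone classical move must be legal in every realisation. -/
def QLegalC (Γ : Pos → Move → Option Pos) (S : Finset Pos) (M : Finset Move) : Prop :=
  QBase Γ S M ∧ (2 ≤ M.card ∨ ∀ G ∈ S, ∀ m ∈ M, (Γ G m).isSome)

/-- A single classical move is C'-allowed: legal in every realisation where the
mover still has at least one classical move. -/
def SingleLegalC' (Γ : Pos → Move → Option Pos) (S : Finset Pos) (m : Move) : Prop :=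
  ∀ G ∈ S, (∃ m', (Γ G m').isSome) → (Γ G m).isSome

/-- Ruleset C'. -/
def QLegalC' (Γ : Pos → Move → Option Pos) (S : Finset Pos) (M : Finset Move) : Prop :=
  QBase Γ S M ∧ (2 ≤ M.card ∨ ∀ m ∈ M, SingleLegalC' Γ S m)

/-- Ruleset D : any nonempty superposition of legal classical moves. -/
def QLegalD (Γ : Pos → Move → Option Pos) (S : Finset Pos) (M : Finset Move) : Prop :=
  QBase Γ S M

def optA (Γ : Pos → Move → Option Pos) (S : Finset Pos) : Set (Finset Pos) :=
  {T | ∃ M, QLegalA Γ S M ∧ T = qApply Γ S M}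
def optB (Γ : Pos → Move → Option Pos) (S : Finset Pos) : Set (Finset Pos) :=
  {T | ∃ M, QLegalB Γ S M ∧ T = qApply Γ S M}
def optC (Γ : Pos → Move → Option Pos) (S : Finset Pos) : Set (Finset Pos) :=
  {T | ∃ M, QLegalC Γ S M ∧ T = qApply Γ S M}
def optC' (Γ : Pos → Move → Option Pos) (S : Finset Pos) : Set (Finset Pos) :=
  {T | ∃ M, QLegalC' Γ S M ∧ T = qApply Γ S M}
def optD (Γ : Pos → Move → Option Pos) (S : Finset Pos) : Set (Finset Pos) :=
  {T | ∃ M, QLegalD Γ S M ∧ T = qApply Γ S M}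

/-- `NPos opt p` : under normal play, the player to move from `p` wins,
i.e. there is a move to a position all of whose options are again `NPos`
(that is, to a previous-player-win position). -/
inductive NPos {α : Type*} (opt : α → Set α) : α → Prop where
  | mk (p q : α) (hq : q ∈ opt p) (h : ∀ r, r ∈ opt q → NPos opt r) :
      NPos opt p

/-- `PPos opt p` : `p` is a previous-player win (the second player wins)
under normal play: every option is a next-player win. -/
def PPos {α : Type*} (opt : α → Set α) (p : α) : Prop :=
  ∀ q ∈ opt p, NPos opt q

/-- Options of the sum of a game with a classical Nim heap: move in the game
component, or decrease the heap component. -/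
def sumNimOpt {α : Type*} (opt : α → Set α) : α × ℕ → Set (α × ℕ) :=
  fun x => {y | (y.1 ∈ opt x.1 ∧ y.2 = x.2) ∨ (y.1 = x.1 ∧ y.2 < x.2)}

/-- `HasGrundy opt p n` : position `p` has Sprague–Grundy value `n` (the value
obtained by the mex rule). By the Sprague–Grundy theorem this holds iff the sum
of `p` with a Nim heap of `n` tokens is a previous-player win. -/
def HasGrundy {α : Type*} (opt : α → Set α) (p : α) (n : ℕ) : Prop :=
  PPos (sumNimOpt opt) (p, n)

/-- Classical single-heap Nim: from a heap of `n` tokens, the move labelled `x`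
removes `x` tokens, legal when `1 ≤ x ≤ n`. -/
def nimΓ : ℕ → ℕ → Option ℕ := fun n x =>
  if 1 ≤ x ∧ x ≤ n then some (n - x) else none

end QGame

/-!
Two superpositions of Nim heaps whose largest heaps agree are bisimilar. Which classical
moves are legal depends only on the largest heap, and so does the largest heap of the
result: playing the moves `M` from heaps of maximum `h` gives a superposition of maximum
`h - min M`. Adding a classical Nim heap preserves bisimilarity, so bisimilar positions
have the same Grundy values.
-/

namespace QGame

section FiberBisimulation

variable {α β : Type*}

/-- The fibres of `f` form a bisimulation; since they are an equivalence relation, the forth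
condition suffices. -/
def IsFiberBisimulation (opt : α → Set α) (f : α → β) : Prop :=
  ∀ a b, f a = f b → ∀ a' ∈ opt a, ∃ b' ∈ opt b, f a' = f b'

variable {opt : α → Set α} {f : α → β}

theorem NPos.of_isFiberBisimulation (hf : IsFiberBisimulation opt f) {a : α}
    (ha : NPos opt a) : ∀ b, f a = f b → NPos opt b := by
  induction ha with
  | mk a r hr _ ih =>
    intro b hab
    obtain ⟨r', hr', hrr'⟩ := hf a b hab r hr
    refine NPos.mk b r' hr' fun s' hs' => ?_
    obtain ⟨s, hs, hs's⟩ := hf r' r hrr'.symm s' hs'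
    exact ih s hs s' hs's.symm

theorem PPos.of_isFiberBisimulation (hf : IsFiberBisimulation opt f) {a b : α}
    (hab : f a = f b) (ha : PPos opt a) : PPos opt b := by
  intro b' hb'
  obtain ⟨a', ha', ha'b'⟩ := hf b a hab.symm b' hb'
  exact (ha a' ha').of_isFiberBisimulation hf b' ha'b'.symm

theorem IsFiberBisimulation.sumNimOpt (hf : IsFiberBisimulation opt f) :
    IsFiberBisimulation (sumNimOpt opt) (Prod.map f id) := by
  rintro ⟨a, n⟩ ⟨b, m⟩ hpair ⟨a', n'⟩ hmove
  obtain ⟨hab, rfl⟩ : f a = f b ∧ n = m := Prod.ext_iff.mp hpair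
  rcases hmove with ⟨ha', hn'⟩ | ⟨ha', hn'⟩
  · obtain ⟨b', hb', hab'⟩ := hf a b hab a' ha'
    exact ⟨(b', n'), Or.inl ⟨hb', hn'⟩, Prod.ext hab' rfl⟩
  · exact ⟨(b, n'), Or.inr ⟨rfl, hn'⟩, Prod.ext (congrArg f ha' |>.trans hab) rfl⟩

theorem IsFiberBisimulation.hasGrundy_iff (hf : IsFiberBisimulation opt f) {a b : α}
    (hab : f a = f b) (n : ℕ) : HasGrundy opt a n ↔ HasGrundy opt b n :=
  ⟨PPos.of_isFiberBisimulation hf.sumNimOpt (Prod.ext hab rfl),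
    PPos.of_isFiberBisimulation hf.sumNimOpt (Prod.ext hab.symm rfl)⟩

end FiberBisimulation

section Nim

variable {S T M : Finset ℕ}

theorem nimΓ_isSome_iff {n x : ℕ} : (nimΓ n x).isSome ↔ 1 ≤ x ∧ x ≤ n := by
  unfold nimΓ
  split_ifs with h <;> simp [h]

theorem mem_qApply_nimΓ {k : ℕ} :
    k ∈ qApply nimΓ S M ↔ ∃ n ∈ S, ∃ x ∈ M, 1 ≤ x ∧ x ≤ n ∧ n - x = k := by
  simp only [qApply, nimΓ, Finset.mem_biUnion, Option.mem_toFinset]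
  refine exists_congr fun n => and_congr_right fun _ => exists_congr fun x =>
    and_congr_right fun _ => ?_
  split_ifs with hx <;>
    simp only [Option.mem_def, Option.some_inj, reduceCtorEq, false_iff] <;> omega

/-- `S.sup id` is the largest heap of `S`; it is `0` for `S = ∅`, which, like `{0}`, has no
options. -/
theorem moveLegal_nimΓ_iff {x : ℕ} : MoveLegal nimΓ S x ↔ 1 ≤ x ∧ x ≤ S.sup id := by
  simp only [MoveLegal, nimΓ_isSome_iff]
  constructor
  · rintro ⟨n, hn, hx, hxn⟩
    exact ⟨hx, hxn.trans (Finset.le_sup (f := id) hn)⟩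
  · rintro ⟨hx, hxS⟩
    obtain ⟨n, hn, hxn⟩ := (Finset.le_sup_iff hx).mp hxS
    exact ⟨n, hn, hx, hxn⟩

theorem moveLegal_nimΓ_eq (h : S.sup id = T.sup id) : MoveLegal nimΓ S = MoveLegal nimΓ T := by
  ext x
  rw [moveLegal_nimΓ_iff, moveLegal_nimΓ_iff, h]

theorem sup_qApply_nimΓ (hM : QBase nimΓ S M) :
    (qApply nimΓ S M).sup id = S.sup id - M.min' hM.1 := by
  obtain ⟨hMne, hlegal⟩ := hM
  have hx₀M := M.min'_mem hMne
  apply le_antisymm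
  · refine Finset.sup_le fun k hk => ?_
    obtain ⟨n, hn, x, hx, -, -, rfl⟩ := mem_qApply_nimΓ.mp hk
    exact tsub_le_tsub (Finset.le_sup (f := id) hn) (M.min'_le x hx)
  · obtain ⟨G, hG, -⟩ := hlegal _ hx₀M
    obtain ⟨n, hn, hnS : S.sup id = n⟩ := S.exists_mem_eq_sup ⟨G, hG⟩ id
    obtain ⟨hx₀, hx₀S⟩ := moveLegal_nimΓ_iff.mp (hlegal _ hx₀M)
    rw [hnS] at hx₀S ⊢
    exact Finset.le_sup (f := id) (mem_qApply_nimΓ.mpr ⟨n, hn, _, hx₀M, hx₀, hx₀S, rfl⟩)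

theorem sup_qApply_nimΓ_congr (h : S.sup id = T.sup id) (hM : QBase nimΓ S M) :
    (qApply nimΓ S M).sup id = (qApply nimΓ T M).sup id := by
  have hMT : QBase nimΓ T M := by rwa [QBase, ← moveLegal_nimΓ_eq h]
  rw [sup_qApply_nimΓ hM, sup_qApply_nimΓ hMT, h]

theorem isFiberBisimulation_optA : IsFiberBisimulation (optA nimΓ) (Finset.sup · id) := by
  rintro S T h _ ⟨M, hM, rfl⟩
  have hlegal : QLegalA nimΓ T M := by simpa only [QLegalA, QBase, moveLegal_nimΓ_eq h] using hM
  exact ⟨_, ⟨M, hlegal, rfl⟩, sup_qApply_nimΓ_congr h hM.1⟩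

theorem isFiberBisimulation_optB : IsFiberBisimulation (optB nimΓ) (Finset.sup · id) := by
  rintro S T h _ ⟨M, hM, rfl⟩
  have hlegal : QLegalB nimΓ T M := by simpa only [QLegalB, QBase, moveLegal_nimΓ_eq h] using hM
  exact ⟨_, ⟨M, hlegal, rfl⟩, sup_qApply_nimΓ_congr h hM.1⟩

theorem isFiberBisimulation_optD : IsFiberBisimulation (optD nimΓ) (Finset.sup · id) := by
  rintro S T h _ ⟨M, hM, rfl⟩
  have hlegal : QLegalD nimΓ T M := by simpa only [QLegalD, QBase, moveLegal_nimΓ_eq h] using hM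
  exact ⟨_, ⟨M, hlegal, rfl⟩, sup_qApply_nimΓ_congr h hM⟩

end Nim

/-- in Rulesets A, B and D, the Grundy value of a superposition
of single Nim heaps depends only on the size of its largest heap. -/
theorem value_depends_only_on_max (S T : Finset ℕ) (hS : S.Nonempty)
    (hT : T.Nonempty) (h : S.max' hS = T.max' hT) :
    (∀ n, HasGrundy (optA nimΓ) S n ↔ HasGrundy (optA nimΓ) T n) ∧
    (∀ n, HasGrundy (optB nimΓ) S n ↔ HasGrundy (optB nimΓ) T n) ∧
    (∀ n, HasGrundy (optD nimΓ) S n ↔ HasGrundy (optD nimΓ) T n) := by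
  have hsup : S.sup id = T.sup id := by
    rwa [Finset.max'_eq_sup', Finset.max'_eq_sup', Finset.sup'_eq_sup, Finset.sup'_eq_sup] at h
  exact ⟨isFiberBisimulation_optA.hasGrundy_iff hsup, isFiberBisimulation_optB.hasGrundy_iff hsup,
    isFiberBisimulation_optD.hasGrundy_iff hsup⟩

end QGame
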